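/- (Existence of the attractor.) Assume that S(h) : Φ → Φ is continuous for every h ∈ 𝒞 and that the semigroup possesses a compact (𝔹,Σ)-attracting set K ⊆ Φ. Then there exists a (𝔹,Σ)-attractor 𝒜 of the semigroup with 𝒜 ⊆ K, namely 𝒜 = closure( ⋃_{B ∈ 𝔹} ω(B) ) is such an attractor. -/

import Mathlib

/-!
Compactness of the attracting set `K` makes every trajectory `S (hₙ) uₙ` with `uₙ ∈ B ∈ 𝔹` and
`hₙ` going deep into `Σ` subconverge to a point of `ω(B)`. Hence every `ω(B)` lies in `K`, and the
union `U` of the `ω(B)` attracts every `B ∈ 𝔹`. Since a ball of radius `dist(h, ∂Σ)` around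
`h ∈ Σ` stays in `Σ`, times deep in `Σ` can be shifted by any fixed `h ∈ 𝒞` in either direction;
with continuity of `S h` this gives `S h (ω(B)) = ω(B)`, and compactness of `closure U` carries
the invariance over to the closure.
-/

open Metric Filter Topology

noncomputable section

/-- The ω-limit set of a set `B` under the multi-parametric semigroup `S`
with time arrow `Sig`. -/
def omegaSet {m : ℕ} {Φ : Type*} [MetricSpace Φ]
    (S : EuclideanSpace ℝ (Fin m) → Φ → Φ) (Sig : Set (EuclideanSpace ℝ (Fin m)))
    (B : Set Φ) : Set Φ :=
  {u₀ | ∃ (h : ℕ → EuclideanSpace ℝ (Fin m)) (u : ℕ → Φ),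
    (∀ n, h n ∈ Sig) ∧
    Tendsto (fun n => infDist (h n) (frontier Sig)) atTop atTop ∧
    (∀ n, u n ∈ B) ∧
    Tendsto (fun n => S (h n) (u n)) atTop (𝓝 u₀)}

/-- `K` is a `(𝔹,Σ)`-attracting set for the semigroup `S`. -/
def IsAttractingSet {m : ℕ} {Φ : Type*} [MetricSpace Φ]
    (S : EuclideanSpace ℝ (Fin m) → Φ → Φ) (Sig : Set (EuclideanSpace ℝ (Fin m)))
    (Bor : Set (Set Φ)) (K : Set Φ) : Prop :=
  ∀ B ∈ Bor, ∀ ε : ℝ, 0 < ε → ∃ D : ℝ, 0 < D ∧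
    ∀ h ∈ Sig, infDist h (frontier Sig) ≥ D → S h '' B ⊆ thickening ε K

/-- `A` is a `(𝔹,Σ)`-attractor: compact, strictly invariant and `(𝔹,Σ)`-attracting. -/
def IsAttractor {m : ℕ} {Φ : Type*} [MetricSpace Φ]
    (S : EuclideanSpace ℝ (Fin m) → Φ → Φ) (C Sig : Set (EuclideanSpace ℝ (Fin m)))
    (Bor : Set (Set Φ)) (A : Set Φ) : Prop :=
  IsCompact A ∧ (∀ h ∈ C, S h '' A = A) ∧ IsAttractingSet S Sig Bor A

section FrontierDistance

variable {E : Type*} [NormedAddCommGroup E] {s : Set E}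
  {ι : Type*} {l : Filter ι} {g : ι → E}

theorem ball_infDist_frontier_subset [NormedSpace ℝ E] [FiniteDimensional ℝ E] {x : E}
    (hx : x ∈ s) : ball x (infDist x (frontier s)) ⊆ s := by
  rcases eq_or_ne s Set.univ with rfl | hs
  · exact Set.subset_univ _
  obtain ⟨y, hy, hxy⟩ := exists_mem_frontier_infDist_compl_eq_dist hx hs
  exact (ball_subset_ball (hxy ▸ infDist_le_dist_of_mem hy)).trans ball_infDist_compl_subset

theorem tendsto_infDist_frontier_add
    (hg : Tendsto (fun i => infDist (g i) (frontier s)) l atTop) (v : E) :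
    Tendsto (fun i => infDist (g i + v) (frontier s)) l atTop := by
  refine tendsto_atTop_mono (fun i => ?_) (tendsto_atTop_add_const_right l (-‖v‖) hg)
  have := infDist_le_infDist_add_dist (s := frontier s) (x := g i) (y := g i + v)
  rw [dist_self_add_right] at this
  linarith

theorem eventually_add_mem [NormedSpace ℝ E] [FiniteDimensional ℝ E] (hgs : ∀ᶠ i in l, g i ∈ s)
    (hg : Tendsto (fun i => infDist (g i) (frontier s)) l atTop) (v : E) :
    ∀ᶠ i in l, g i + v ∈ s := by
  filter_upwards [hgs, hg.eventually_gt_atTop ‖v‖] with i hi hv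
  exact ball_infDist_frontier_subset hi (by rwa [mem_ball, dist_self_add_left])

end FrontierDistance

theorem IsCompact.exists_clusterPt_of_le_nhdsSet {X : Type*} [TopologicalSpace X] {K : Set X}
    (hK : IsCompact K) {F : Filter X} [NeBot F] (hF : F ≤ 𝓝ˢ K) : ∃ x ∈ K, ClusterPt x F := by
  by_contra! h
  simp only [clusterPt_iff_not_disjoint, not_not] at h
  exact NeBot.ne' (disjoint_self.1 ((hK.disjoint_nhdsSet_left.2 h).mono_left hF))

theorem IsCompact.tendsto_subseq_of_tendsto_nhdsSet {X : Type*} [TopologicalSpace X]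
    [FirstCountableTopology X] {K : Set X} (hK : IsCompact K) {u : ℕ → X}
    (hu : Tendsto u atTop (𝓝ˢ K)) :
    ∃ x ∈ K, ∃ φ : ℕ → ℕ, StrictMono φ ∧ Tendsto (u ∘ φ) atTop (𝓝 x) := by
  obtain ⟨x, hxK, hx⟩ := hK.exists_clusterPt_of_le_nhdsSet hu
  exact ⟨x, hxK, MapClusterPt.tendsto_subseq hx⟩

theorem image_closure_eq_of_image_eq {X : Type*} [TopologicalSpace X] [T2Space X] {f : X → X}
    (hf : Continuous f) {U : Set X} (hU : IsCompact (closure U)) (hfU : f '' U = U) :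
    f '' closure U = closure U := by
  refine ((image_closure_subset_closure_image hf).trans (closure_mono hfU.le)).antisymm ?_
  exact closure_minimal (hfU.ge.trans (Set.image_mono subset_closure)) (hU.image hf).isClosed

section OmegaLimit

variable {m : ℕ} {Φ : Type*} [MetricSpace Φ] {S : EuclideanSpace ℝ (Fin m) → Φ → Φ}
  {C Sig : Set (EuclideanSpace ℝ (Fin m))} {Bor : Set (Set Φ)} {B K : Set Φ}

theorem mem_omegaSet_of_eventually {h : ℕ → EuclideanSpace ℝ (Fin m)} {u : ℕ → Φ} {u₀ : Φ}
    (hSig : ∀ᶠ n in atTop, h n ∈ Sig)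
    (hinf : Tendsto (fun n => infDist (h n) (frontier Sig)) atTop atTop) (hu : ∀ n, u n ∈ B)
    (hlim : Tendsto (fun n => S (h n) (u n)) atTop (𝓝 u₀)) :
    u₀ ∈ omegaSet S Sig B := by
  obtain ⟨N, hN⟩ := eventually_atTop.1 hSig
  exact ⟨fun n => h (n + N), fun n => u (n + N), fun n => hN _ le_add_self,
    hinf.comp (tendsto_add_atTop_nat N), fun n => hu _, hlim.comp (tendsto_add_atTop_nat N)⟩

theorem IsAttractingSet.tendsto_nhdsSet (hK : IsCompact K)
    (hKattr : IsAttractingSet S Sig Bor K) (hB : B ∈ Bor) {ι : Type*} {l : Filter ι}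
    {h : ι → EuclideanSpace ℝ (Fin m)} {u : ι → Φ} (hSig : ∀ᶠ i in l, h i ∈ Sig)
    (hinf : Tendsto (fun i => infDist (h i) (frontier Sig)) l atTop) (hu : ∀ i, u i ∈ B) :
    Tendsto (fun i => S (h i) (u i)) l (𝓝ˢ K) := by
  refine (hasBasis_nhdsSet_thickening hK).tendsto_right_iff.2 fun ε hε => ?_
  obtain ⟨D, -, hD⟩ := hKattr B hB ε hε
  filter_upwards [hSig, hinf.eventually_ge_atTop D] with i hi hiD
  exact hD _ hi hiD (Set.mem_image_of_mem _ (hu i))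

theorem IsAttractingSet.omegaSet_subset (hK : IsCompact K)
    (hKattr : IsAttractingSet S Sig Bor K) (hB : B ∈ Bor) : omegaSet S Sig B ⊆ K := by
  rintro u₀ ⟨h, u, hSig, hinf, hu, hlim⟩
  by_contra hu₀
  rw [← hK.isClosed.closure_eq, ← disjoint_nhds_nhdsSet] at hu₀
  exact (hlim.not_tendsto hu₀) (hKattr.tendsto_nhdsSet hK hB (.of_forall hSig) hinf hu)

theorem IsAttractingSet.exists_mem_omegaSet_tendsto_subseq (hK : IsCompact K)
    (hKattr : IsAttractingSet S Sig Bor K) (hB : B ∈ Bor) {h : ℕ → EuclideanSpace ℝ (Fin m)}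
    {u : ℕ → Φ} (hSig : ∀ᶠ n in atTop, h n ∈ Sig)
    (hinf : Tendsto (fun n => infDist (h n) (frontier Sig)) atTop atTop) (hu : ∀ n, u n ∈ B) :
    ∃ u₀ ∈ omegaSet S Sig B, ∃ φ : ℕ → ℕ, StrictMono φ ∧
      Tendsto (fun n => S (h (φ n)) (u (φ n))) atTop (𝓝 u₀) := by
  obtain ⟨u₀, -, φ, hφ, hlim⟩ :=
    hK.tendsto_subseq_of_tendsto_nhdsSet (hKattr.tendsto_nhdsSet hK hB hSig hinf hu)
  exact ⟨u₀, mem_omegaSet_of_eventually (hφ.tendsto_atTop.eventually hSig)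
    (hinf.comp hφ.tendsto_atTop) (fun n => hu _) hlim, φ, hφ, hlim⟩

theorem IsAttractingSet.of_omegaSet_subset (hK : IsCompact K)
    (hKattr : IsAttractingSet S Sig Bor K) {A : Set Φ}
    (hA : ∀ B ∈ Bor, omegaSet S Sig B ⊆ A) : IsAttractingSet S Sig Bor A := by
  intro B hB ε hε
  by_contra! hfar
  have hseq : ∀ n : ℕ, ∃ h ∈ Sig, (n : ℝ) + 1 ≤ infDist h (frontier Sig) ∧
      ∃ u ∈ B, S h u ∉ thickening ε A := by
    intro n
    obtain ⟨h, hSig, hinf, hout⟩ := hfar (n + 1) (by positivity)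
    obtain ⟨_, ⟨u, hu, rfl⟩, hout⟩ := Set.not_subset.1 hout
    exact ⟨h, hSig, hinf, u, hu, hout⟩
  choose h hSig hinf u hu hout using hseq
  have hinf' : Tendsto (fun n => infDist (h n) (frontier Sig)) atTop atTop :=
    tendsto_atTop_mono (fun n => by linarith [hinf n]) tendsto_natCast_atTop_atTop
  obtain ⟨u₀, hu₀, φ, -, hlim⟩ :=
    hKattr.exists_mem_omegaSet_tendsto_subseq hK hB (.of_forall hSig) hinf' hu
  obtain ⟨n, hn⟩ := (hlim.eventually (ball_mem_nhds u₀ hε)).exists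
  exact hout _ (mem_thickening_iff.2 ⟨u₀, hA B hB hu₀, hn⟩)

section Invariance

variable (hSadd : ∀ h₁ ∈ C, ∀ h₂ ∈ C, S (h₁ + h₂) = S h₁ ∘ S h₂) (hSigC : Sig ⊆ C)
  {h : EuclideanSpace ℝ (Fin m)} (hh : h ∈ C) (hcont : Continuous (S h))
include hSadd hSigC hh hcont

theorem image_omegaSet_subset : S h '' omegaSet S Sig B ⊆ omegaSet S Sig B := by
  rintro _ ⟨u₀, ⟨g, u, hgSig, hginf, hu, hlim⟩, rfl⟩
  refine mem_omegaSet_of_eventually (eventually_add_mem (.of_forall hgSig) hginf h)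
    (tendsto_infDist_frontier_add hginf h) hu (((hcont.tendsto u₀).comp hlim).congr fun n => ?_)
  rw [add_comm, hSadd h hh _ (hSigC (hgSig n)), Function.comp_apply, Function.comp_apply]

theorem omegaSet_subset_image (hK : IsCompact K) (hKattr : IsAttractingSet S Sig Bor K)
    (hB : B ∈ Bor) : omegaSet S Sig B ⊆ S h '' omegaSet S Sig B := by
  rintro u₀ ⟨g, u, hgSig, hginf, hu, hlim⟩
  have hSig := eventually_add_mem (.of_forall hgSig) hginf (-h)
  obtain ⟨w, hw, φ, hφ, hwlim⟩ := hKattr.exists_mem_omegaSet_tendsto_subseq hK hB hSig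
    (tendsto_infDist_frontier_add hginf (-h)) hu
  refine ⟨w, hw, tendsto_nhds_unique ((hcont.tendsto w).comp hwlim) ?_⟩
  refine (hlim.comp hφ.tendsto_atTop).congr' ((hφ.tendsto_atTop.eventually hSig).mono
    fun n hn => ?_)
  rw [Function.comp_apply, Function.comp_apply, ← Function.comp_apply (f := S h),
    ← hSadd h hh _ (hSigC hn), add_add_neg_cancel'_right]

theorem image_omegaSet (hK : IsCompact K) (hKattr : IsAttractingSet S Sig Bor K)
    (hB : B ∈ Bor) : S h '' omegaSet S Sig B = omegaSet S Sig B :=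
  (image_omegaSet_subset hSadd hSigC hh hcont).antisymm
    (omegaSet_subset_image hSadd hSigC hh hcont hK hKattr hB)

end Invariance

end OmegaLimit

theorem exists_attractor_general
    {m : ℕ} {Φ : Type*} [MetricSpace Φ]
    (C Sig : Set (EuclideanSpace ℝ (Fin m)))
    (S : EuclideanSpace ℝ (Fin m) → Φ → Φ) (Bor : Set (Set Φ))
    (hSadd : ∀ h₁ ∈ C, ∀ h₂ ∈ C, S (h₁ + h₂) = S h₁ ∘ S h₂)
    (hScont : ∀ h ∈ C, Continuous (S h))
    (hSigC : Sig ⊆ C)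
    (K : Set Φ) (hK : IsCompact K) (hKattr : IsAttractingSet S Sig Bor K) :
    closure (⋃ B ∈ Bor, omegaSet S Sig B) ⊆ K ∧
    IsAttractor S C Sig Bor (closure (⋃ B ∈ Bor, omegaSet S Sig B)) := by
  set U := ⋃ B ∈ Bor, omegaSet S Sig B
  have hAK : closure U ⊆ K :=
    closure_minimal (Set.iUnion₂_subset fun B hB => hKattr.omegaSet_subset hK hB) hK.isClosed
  have hAcpt : IsCompact (closure U) := hK.of_isClosed_subset isClosed_closure hAK
  refine ⟨hAK, hAcpt, fun h hh => image_closure_eq_of_image_eq (hScont h hh) hAcpt ?_,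
    hKattr.of_omegaSet_subset hK fun B hB => subset_closure.trans' (Set.subset_biUnion_of_mem hB)⟩
  rw [Set.image_iUnion₂]
  exact Set.iUnion₂_congr fun B hB => image_omegaSet hSadd hSigC hh (hScont h hh) hK hKattr hB

/-- Existence of the `(𝔹,Σ)`-attractor: if all `S h` are continuous and there is a compact
`(𝔹,Σ)`-attracting set `K`, then `𝒜 = closure (⋃_{B ∈ 𝔹} ω(B))` is a `(𝔹,Σ)`-attractor
contained in `K`. -/
theorem exists_attractor
    {m : ℕ} {Φ : Type*} [MetricSpace Φ] (hm : 1 ≤ m)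
    (C Sig : Set (EuclideanSpace ℝ (Fin m)))
    (S : EuclideanSpace ℝ (Fin m) → Φ → Φ) (Bor : Set (Set Φ))
    (hCclosed : IsClosed C) (hCint : (interior C).Nonempty)
    (hC0 : (0 : EuclideanSpace ℝ (Fin m)) ∈ C)
    (hCadd : ∀ h₁ ∈ C, ∀ h₂ ∈ C, h₁ + h₂ ∈ C)
    (hCcone : ∀ t : ℝ, 0 ≤ t → ∀ h ∈ C, t • h ∈ C)
    (hS0 : S 0 = id)
    (hSadd : ∀ h₁ ∈ C, ∀ h₂ ∈ C, S (h₁ + h₂) = S h₁ ∘ S h₂)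
    (hScont : ∀ h ∈ C, Continuous (S h))
    (hSigne : Sig.Nonempty) (hSigC : Sig ⊆ C)
    (hfr : frontier C ⊆ frontier Sig)
    (hcof : ∀ D : ℝ, 0 < D → ∃ h ∈ Sig, infDist h (frontier Sig) ≥ D)
    (K : Set Φ) (hK : IsCompact K) (hKattr : IsAttractingSet S Sig Bor K) :
    closure (⋃ B ∈ Bor, omegaSet S Sig B) ⊆ K ∧
    IsAttractor S C Sig Bor (closure (⋃ B ∈ Bor, omegaSet S Sig B)) :=
  exists_attractor_general C Sig S Bor hSadd hScont hSigC K hK hKattr
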